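/- Let n ≥ 1 be an integer, t_1, …, t_{n−1} real constants, t_n := 1, and α ∈ ℝ. Let w : ℝ → ℝ be smooth, set u := w' − w² and f_n := Σ_{l=1}^n t_l·L_l[u], and suppose w solves P_II^(n), i.e. f_n'(z) + 2·w(z)·f_n(z) = z·w(z) + α for all z ∈ ℝ, and that z − 2·f_n(z) ≠ 0 for all z ∈ ℝ. Then for all z ∈ ℝ: f_n'''(z) + 4·u(z)·f_n'(z) + 2·u'(z)·f_n(z) − 2·u(z) − z·u'(z) = 0. -/

import Mathlib

open scoped ContDiff


/-- The Lenard sequence of a function `u : ℝ → ℝ`: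
`L₀[u] = 1/2`, `L₁[u] = u`, and for `k ≥ 1`,
`L_{k+1}[u] = (L_k[u])'' + 3·L_k[u]·L₁[u]
  + ∑_{j=1}^{k-1} ( L_{k-j}[u]·(4·L₁[u]·L_j[u] - L_{j+1}[u] + 2·(L_j[u])'') - (L_j[u])'·(L_{k-j}[u])' )`. -/
noncomputable def lenard (u : ℝ → ℝ) : ℕ → ℝ → ℝ
  | 0 => fun _ => 1 / 2
  | 1 => u
  | k + 2 => fun z =>
      deriv (deriv (lenard u (k + 1))) z
        + 3 * lenard u (k + 1) z * lenard u 1 z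
        + ∑ j ∈ (Finset.range k).attach,
            (lenard u (k - j.1) z *
                (4 * lenard u 1 z * lenard u (j.1 + 1) z - lenard u (j.1 + 2) z
                  + 2 * deriv (deriv (lenard u (j.1 + 1))) z)
              - deriv (lenard u (j.1 + 1)) z * deriv (lenard u (k - j.1)) z)
  termination_by k => k
  decreasing_by
    all_goals first
      | omega
      | (have h := j.2; simp only [Finset.mem_range] at h; omega)

lemma contDiff_deriv {g : ℝ → ℝ} (hg : ContDiff ℝ ∞ g) : ContDiff ℝ ∞ (deriv g) :=
  (contDiff_infty_iff_deriv.mp hg).2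

lemma lenard_contDiff {u : ℝ → ℝ} (hu : ContDiff ℝ ∞ u) (k : ℕ) :
    ContDiff ℝ ∞ (lenard u k) := by
  induction k using Nat.strong_induction_on with
  | _ k ih =>
    match k with
    | 0 => simpa [lenard] using contDiff_const (c := (1/2 : ℝ))
    | 1 => simpa [lenard] using hu
    | k + 2 =>
      have h1 : ContDiff ℝ ∞ (lenard u (k + 1)) := ih _ (by omega)
      have hu1 : ContDiff ℝ ∞ (lenard u 1) := ih 1 (by omega)
      rw [lenard]
      apply ContDiff.add
      · exact (contDiff_deriv (contDiff_deriv h1)).add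
          ((contDiff_const.mul h1).mul hu1)
      · apply ContDiff.sum
        intro j _
        have hj : j.1 < k := by have := j.2; simp only [Finset.mem_range] at this; exact this
        have hA : ContDiff ℝ ∞ (lenard u (k - j.1)) := ih _ (by omega)
        have hB : ContDiff ℝ ∞ (lenard u (j.1 + 1)) := ih _ (by omega)
        have hC : ContDiff ℝ ∞ (lenard u (j.1 + 2)) := ih _ (by omega)
        exact (hA.mul (((contDiff_const.mul hu1).mul hB).sub hC |>.add
            (contDiff_const.mul (contDiff_deriv (contDiff_deriv hB))))).sub
          ((contDiff_deriv hB).mul (contDiff_deriv hA))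

/-- **Differentiated relation (3.5)** of the paper, after dividing by the nonvanishing factor
`z - 2 f_n`: if `w` smoothly solves `P_II^(n)` and `z - 2 f_n(z) ≠ 0` everywhere, then
`f_n''' + 4 u f_n' + 2 u' f_n - 2 u - z u' = 0`. -/
theorem differentiated_relation_PII_hierarchy
    (n : ℕ) (hn : 1 ≤ n) (t : ℕ → ℝ) (htn : t n = 1) (α : ℝ)
    (w : ℝ → ℝ) (hw : ContDiff ℝ (⊤ : ℕ∞) w)
    (u f : ℝ → ℝ)
    (hu : ∀ z : ℝ, u z = deriv w z - (w z) ^ 2)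
    (hf : ∀ z : ℝ, f z = ∑ l ∈ Finset.Icc 1 n, t l * lenard u l z)
    (hP : ∀ z : ℝ, deriv f z + 2 * w z * f z = z * w z + α)
    (hne : ∀ z : ℝ, z - 2 * f z ≠ 0) :
    ∀ z : ℝ,
      deriv (deriv (deriv f)) z + 4 * u z * deriv f z + 2 * deriv u z * f z
        - 2 * u z - z * deriv u z = 0 := by
  have hwi : ContDiff ℝ ∞ w := hw.of_le (by simp)
  have hle : (∞ : WithTop ℕ∞) ≠ 0 := by simp
  have hdw : Differentiable ℝ w := hwi.differentiable hle
  have hw' : ContDiff ℝ ∞ (deriv w) := contDiff_deriv hwi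
  have hdw' : Differentiable ℝ (deriv w) := hw'.differentiable hle
  have huS : ContDiff ℝ ∞ u := by
    have : u = fun z => deriv w z - (w z) ^ 2 := funext hu
    rw [this]; exact hw'.sub (hwi.pow 2)
  have hfS : ContDiff ℝ ∞ f := by
    have : f = fun z => ∑ l ∈ Finset.Icc 1 n, t l * lenard u l z := funext hf
    rw [this]
    exact ContDiff.sum fun l _ => contDiff_const.mul (lenard_contDiff huS l)
  have hdf : Differentiable ℝ f := hfS.differentiable hle
  have hdf' : Differentiable ℝ (deriv f) := (contDiff_deriv hfS).differentiable hle
  have eF1 : ∀ z, deriv f z = z * w z + α - 2 * (w z * f z) := fun z => by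
    have := hP z; linarith
  have HdF' : ∀ z : ℝ, HasDerivAt (deriv f)
      (w z + z * deriv w z - 2 * (deriv w z * f z + w z * deriv f z)) z := by
    intro z
    have h : HasDerivAt (fun x => x * w x + α - 2 * (w x * f x))
        (w z + z * deriv w z - 2 * (deriv w z * f z + w z * deriv f z)) z := by
      have h0 := (((hasDerivAt_id z).mul (hdw z).hasDerivAt).add_const α).sub
        (((hdw z).hasDerivAt.mul ((hdf z).hasDerivAt)).const_mul 2)
      refine h0.congr_deriv ?_; (try simp only [id_eq]); ring
    exact h.congr_of_eventuallyEq (Filter.Eventually.of_forall fun x => eF1 x)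
  have eF2 : ∀ z : ℝ, deriv (deriv f) z
      = w z + z * deriv w z - 2 * (deriv w z * f z + w z * deriv f z) :=
    fun z => (HdF' z).deriv
  have HdF'' : ∀ z : ℝ, HasDerivAt (deriv (deriv f))
      (deriv w z + (deriv w z + z * deriv (deriv w) z)
        - 2 * ((deriv (deriv w) z * f z + deriv w z * deriv f z)
            + (deriv w z * deriv f z + w z * deriv (deriv f) z))) z := by
    intro z
    have h : HasDerivAt (fun x => w x + x * deriv w x - 2 * (deriv w x * f x + w x * deriv f x))
        (deriv w z + (deriv w z + z * deriv (deriv w) z)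
          - 2 * ((deriv (deriv w) z * f z + deriv w z * deriv f z)
              + (deriv w z * deriv f z + w z * deriv (deriv f) z))) z := by
      have h0 := (((hdw z).hasDerivAt.add ((hasDerivAt_id z).mul (hdw' z).hasDerivAt)).sub
        ((((hdw' z).hasDerivAt.mul (hdf z).hasDerivAt).add
          ((hdw z).hasDerivAt.mul (hdf' z).hasDerivAt)).const_mul 2))
      refine h0.congr_deriv ?_; (try simp only [id_eq]); ring
    exact h.congr_of_eventuallyEq (Filter.Eventually.of_forall fun x => eF2 x)
  have eF3 : ∀ z : ℝ, deriv (deriv (deriv f)) z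
      = deriv w z + (deriv w z + z * deriv (deriv w) z)
        - 2 * ((deriv (deriv w) z * f z + deriv w z * deriv f z)
            + (deriv w z * deriv f z + w z * deriv (deriv f) z)) :=
    fun z => (HdF'' z).deriv
  have hdu : ∀ z : ℝ, deriv u z = deriv (deriv w) z - 2 * (w z * deriv w z) := by
    intro z
    have h : HasDerivAt u (deriv (deriv w) z - 2 * (w z * deriv w z)) z := by
      have h0 := (hdw' z).hasDerivAt.sub ((hdw z).hasDerivAt.pow 2)
      have h1 : HasDerivAt (fun x => deriv w x - w x ^ 2)
          (deriv (deriv w) z - 2 * (w z * deriv w z)) z := by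
        refine h0.congr_deriv ?_; (try simp only [id_eq]); ring
      exact h1.congr_of_eventuallyEq (Filter.Eventually.of_forall fun x => hu x)
    exact h.deriv
  intro z
  rw [eF3 z, eF2 z, eF1 z, hdu z, hu z]
  ring
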